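/- arXiv:2404.12848 — 3 statements merged into one kernel-verified Lean document; each statement's English description precedes it below -/
import Mathlib

section
/- Let p>1, q>1, let Θ⊂ℝⁿ×ℝ be bounded with diameter D>0, and define ψ_j(x,t) = j·((q-1)/q)·|x|^{q/(q-1)} + j^{q-1}·((n+(p-q)/(q-1))/(2D))·t². Then for every (x,t)∈Θ with x≠0 and 0≤t≤D, one has ∂_t ψ_j(x,t) − Δ_p^q ψ_j(x,t) = j^{q-1}(n+(p-q)/(q-1))·(t/D − 1) ≤ 0, so ψ_j is a classical subsolution of ∂_t u = Δ_p^q u away from x=0. -/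
open Real Filter

/-- Partial derivative in direction `i`. -/
noncomputable def pdrv {n : ℕ} (u : EuclideanSpace ℝ (Fin n) → ℝ)
    (x : EuclideanSpace ℝ (Fin n)) (i : Fin n) : ℝ :=
  fderiv ℝ u x (EuclideanSpace.single i 1)

/-- Second partial derivative. -/
noncomputable def pdrv2 {n : ℕ} (u : EuclideanSpace ℝ (Fin n) → ℝ)
    (x : EuclideanSpace ℝ (Fin n)) (i j : Fin n) : ℝ :=
  pdrv (fun y => pdrv u y j) x i

/-- Square of the norm of the gradient. -/
noncomputable def gradSqNorm {n : ℕ} (u : EuclideanSpace ℝ (Fin n) → ℝ)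
    (x : EuclideanSpace ℝ (Fin n)) : ℝ :=
  ∑ i, (pdrv u x i) ^ 2

/-- The operator `Δ_p^q u = |∇u|^(q-2) (Δu + (p-2) Δ_∞^N u)`. -/
noncomputable def DeltaPQ (p q : ℝ) {n : ℕ} (u : EuclideanSpace ℝ (Fin n) → ℝ)
    (x : EuclideanSpace ℝ (Fin n)) : ℝ :=
  Real.sqrt (gradSqNorm u x) ^ (q - 2) *
    ((∑ i, pdrv2 u x i i) +
      (p - 2) * (∑ i, ∑ j, pdrv u x i * pdrv u x j * pdrv2 u x i j) / gradSqNorm u x)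

lemma norm_rpow_eq {n : ℕ} (a : ℝ) (y : EuclideanSpace ℝ (Fin n)) :
    ‖y‖ ^ a = ((‖y‖ ^ 2 : ℝ)) ^ (a / 2) := by
  rw [← Real.rpow_natCast ‖y‖ 2, ← Real.rpow_mul (norm_nonneg y)]
  norm_num
  rw [mul_div_cancel₀]; norm_num

lemma hasFDerivAt_normSq_rpow {n : ℕ} (r : ℝ) (x : EuclideanSpace ℝ (Fin n)) (hx : x ≠ 0) :
    HasFDerivAt (fun y : EuclideanSpace ℝ (Fin n) => ((‖y‖ ^ 2 : ℝ)) ^ r)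
      ((r * (‖x‖ ^ 2 : ℝ) ^ (r - 1)) • (2 • innerSL ℝ x)) x := by
  have hs : (‖x‖ ^ 2 : ℝ) ≠ 0 := pow_ne_zero 2 (norm_ne_zero_iff.mpr hx)
  have h1 : HasFDerivAt (fun y : EuclideanSpace ℝ (Fin n) => (‖y‖ ^ 2 : ℝ))
      (2 • innerSL ℝ x) x := (hasStrictFDerivAt_norm_sq x).hasFDerivAt
  have h2 : HasDerivAt (fun s : ℝ => s ^ r) (r * (‖x‖ ^ 2 : ℝ) ^ (r - 1)) (‖x‖ ^ 2 : ℝ) :=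
    Real.hasDerivAt_rpow_const (Or.inl hs)
  exact h2.comp_hasFDerivAt x h1

lemma pdrv_eq {n : ℕ} (c a b : ℝ) (x : EuclideanSpace ℝ (Fin n)) (hx : x ≠ 0) (i : Fin n) :
    pdrv (fun y => c * ‖y‖ ^ a + b) x i
      = c * a * ((‖x‖ ^ 2 : ℝ)) ^ (a / 2 - 1) * x i := by
  have h := ((hasFDerivAt_normSq_rpow (a / 2) x hx).const_mul c).add_const b
  have hu : (fun y : EuclideanSpace ℝ (Fin n) => c * ‖y‖ ^ a + b)
      = fun y => c * ((‖y‖ ^ 2 : ℝ)) ^ (a / 2) + b := by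
    funext y; rw [norm_rpow_eq]
  rw [pdrv, hu, h.fderiv]
  simp [EuclideanSpace.inner_single_right, real_inner_smul_left, smul_eq_mul]
  ring

lemma pdrv2_eq {n : ℕ} (c a b : ℝ) (x : EuclideanSpace ℝ (Fin n)) (hx : x ≠ 0) (i k : Fin n) :
    pdrv2 (fun y => c * ‖y‖ ^ a + b) x i k
      = c * a * (2 * (a / 2 - 1) * ((‖x‖ ^ 2 : ℝ)) ^ (a / 2 - 2) * x i * x k
          + ((‖x‖ ^ 2 : ℝ)) ^ (a / 2 - 1) * (if i = k then 1 else 0)) := by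
  have heq : (fun y => pdrv (fun y => c * ‖y‖ ^ a + b) y k)
      =ᶠ[nhds x] fun y : EuclideanSpace ℝ (Fin n) =>
        (c * a * ((‖y‖ ^ 2 : ℝ)) ^ (a / 2 - 1)) * y k := by
    filter_upwards [IsOpen.mem_nhds isOpen_compl_singleton hx] with y hy
    rw [pdrv_eq c a b y hy k]
  have h1 : HasFDerivAt (fun y : EuclideanSpace ℝ (Fin n) =>
        c * a * ((‖y‖ ^ 2 : ℝ)) ^ (a / 2 - 1))
      ((c * a) • ((a / 2 - 1) * (‖x‖ ^ 2 : ℝ) ^ (a / 2 - 1 - 1)) • (2 • innerSL ℝ x)) x :=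
    (hasFDerivAt_normSq_rpow (a / 2 - 1) x hx).const_mul (c * a)
  have h2 : HasFDerivAt (fun y : EuclideanSpace ℝ (Fin n) => y k)
      (EuclideanSpace.proj (𝕜 := ℝ) k) x := (EuclideanSpace.proj (𝕜 := ℝ) k).hasFDerivAt
  have h3 : HasFDerivAt (fun y : EuclideanSpace ℝ (Fin n) =>
      c * a * ((‖y‖ ^ 2 : ℝ)) ^ (a / 2 - 1) * y k) _ x := h1.mul h2
  rw [pdrv2, pdrv, heq.fderiv_eq, h3.fderiv]
  have h4 : (a / 2 - 1 - 1) = a / 2 - 2 := by ring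
  simp [EuclideanSpace.inner_single_right, real_inner_smul_left, smul_eq_mul,
    EuclideanSpace.single_apply, h4, eq_comm]
  split_ifs <;> ring

theorem stmt2 (n : ℕ) (p q D : ℝ) (hp : 1 < p) (hq : 1 < q) (hD : 0 < D)
    (Θ : Set (EuclideanSpace ℝ (Fin n) × ℝ)) (hbdd : Bornology.IsBounded Θ)
    (hdiam : Metric.diam Θ = D) (hcoef : 0 ≤ (n : ℝ) + (p - q) / (q - 1))
    (j : ℕ) (hj : 0 < j) (x : EuclideanSpace ℝ (Fin n)) (t : ℝ)
    (hmem : (x, t) ∈ Θ) (hx : x ≠ 0) (ht0 : 0 ≤ t) (htD : t ≤ D) :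
    deriv (fun s : ℝ =>
        (j : ℝ) * ((q - 1) / q) * ‖x‖ ^ (q / (q - 1))
          + (j : ℝ) ^ (q - 1) * (((n : ℝ) + (p - q) / (q - 1)) / (2 * D)) * s ^ 2) t
      - DeltaPQ p q (fun y : EuclideanSpace ℝ (Fin n) =>
          (j : ℝ) * ((q - 1) / q) * ‖y‖ ^ (q / (q - 1))
            + (j : ℝ) ^ (q - 1) * (((n : ℝ) + (p - q) / (q - 1)) / (2 * D)) * t ^ 2) x
      = (j : ℝ) ^ (q - 1) * ((n : ℝ) + (p - q) / (q - 1)) * (t / D - 1) ∧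
    (j : ℝ) ^ (q - 1) * ((n : ℝ) + (p - q) / (q - 1)) * (t / D - 1) ≤ 0 := by
  have hq1 : q - 1 ≠ 0 := sub_ne_zero.mpr (ne_of_gt hq)
  have hq0 : q ≠ 0 := by positivity
  have hj0 : (0 : ℝ) < (j : ℝ) := by exact_mod_cast hj
  set K : ℝ := (n : ℝ) + (p - q) / (q - 1) with hKdef
  constructor
  · -- the main computation
    set a : ℝ := q / (q - 1) with hadef
    set c : ℝ := (j : ℝ) * ((q - 1) / q) with hcdef
    set b : ℝ := (j : ℝ) ^ (q - 1) * (K / (2 * D)) * t ^ 2 with hbdef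
    have hca : c * a = (j : ℝ) := by rw [hcdef, hadef]; field_simp
    have hS : (0 : ℝ) < ‖x‖ ^ 2 := by
      have := norm_pos_iff.mpr hx; positivity
    set S : ℝ := ‖x‖ ^ 2 with hSdef
    have hT : (0 : ℝ) < S ^ (a / 2 - 1) := Real.rpow_pos_of_pos hS _
    have hT2S : S ^ (a / 2 - 2) * S = S ^ (a / 2 - 1) := by
      rw [show a / 2 - 1 = a / 2 - 2 + 1 by ring, Real.rpow_add_one hS.ne']
    -- time derivative
    have hderiv : deriv (fun s : ℝ => c * ‖x‖ ^ a + (j : ℝ) ^ (q - 1) * (K / (2 * D)) * s ^ 2) t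
        = (j : ℝ) ^ (q - 1) * (K / (2 * D)) * (2 * t ^ 1) := by
      have h := (((hasDerivAt_pow 2 t).const_mul ((j : ℝ) ^ (q - 1) * (K / (2 * D)))).const_add
        (c * ‖x‖ ^ a))
      simpa using h.deriv
    -- sums of coordinates
    have hsum : ∑ i, x i ^ 2 = S := by
      rw [hSdef, EuclideanSpace.norm_eq, Real.sq_sqrt (by positivity)]
      refine Finset.sum_congr rfl fun i _ => ?_
      rw [Real.norm_eq_abs, sq_abs]
    set u : EuclideanSpace ℝ (Fin n) → ℝ := fun y => c * ‖y‖ ^ a + b with hudef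
    have e_pdrv : ∀ i, pdrv u x i = (j : ℝ) * S ^ (a / 2 - 1) * x i := by
      intro i
      rw [hudef, pdrv_eq c a b x hx i, hca]
    have e_grad : gradSqNorm u x = (j : ℝ) ^ 2 * (S ^ (a / 2 - 1)) ^ 2 * S := by
      rw [gradSqNorm]
      calc ∑ i, pdrv u x i ^ 2
          = ∑ i, (j : ℝ) ^ 2 * (S ^ (a / 2 - 1)) ^ 2 * x i ^ 2 :=
            Finset.sum_congr rfl fun i _ => by rw [e_pdrv i]; ring
        _ = (j : ℝ) ^ 2 * (S ^ (a / 2 - 1)) ^ 2 * S := by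
            rw [← Finset.mul_sum, hsum]
    have hgradpos : (0 : ℝ) < gradSqNorm u x := by
      rw [e_grad]; positivity
    have e_lap : ∑ i, pdrv2 u x i i = (j : ℝ) * S ^ (a / 2 - 1) * (2 * (a / 2 - 1) + n) := by
      calc ∑ i, pdrv2 u x i i
          = ∑ i, (c * a * (2 * (a / 2 - 1) * S ^ (a / 2 - 2)) * x i ^ 2
              + c * a * S ^ (a / 2 - 1)) := by
            refine Finset.sum_congr rfl fun i _ => ?_
            rw [hudef, pdrv2_eq c a b x hx i i, if_pos rfl]
            ring
        _ = c * a * (2 * (a / 2 - 1) * S ^ (a / 2 - 2)) * S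
              + (n : ℝ) * (c * a * S ^ (a / 2 - 1)) := by
            rw [Finset.sum_add_distrib, ← Finset.mul_sum, hsum, Finset.sum_const,
              Finset.card_univ, Fintype.card_fin, nsmul_eq_mul]
        _ = (j : ℝ) * S ^ (a / 2 - 1) * (2 * (a / 2 - 1) + n) := by
            rw [hca, ← hT2S]; ring
    have e_cross : ∑ i, ∑ k, pdrv u x i * pdrv u x k * pdrv2 u x i k
        = gradSqNorm u x * ((j : ℝ) * S ^ (a / 2 - 1) * (2 * (a / 2 - 1) + 1)) := by
      set C1 : ℝ := (j : ℝ) ^ 2 * (S ^ (a / 2 - 1)) ^ 2 * ((c * a) * (2 * (a / 2 - 1))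
        * S ^ (a / 2 - 2)) with hC1
      set C2 : ℝ := (j : ℝ) ^ 2 * (S ^ (a / 2 - 1)) ^ 2 * ((c * a) * S ^ (a / 2 - 1)) with hC2
      have step : ∀ i k : Fin n, pdrv u x i * pdrv u x k * pdrv2 u x i k
          = C1 * x i ^ 2 * x k ^ 2 + C2 * (if i = k then x i ^ 2 else 0) := by
        intro i k
        rw [e_pdrv i, e_pdrv k, hudef, pdrv2_eq c a b x hx i k, hC1, hC2]
        split_ifs with h
        · subst h; ring
        · ring
      calc ∑ i, ∑ k, pdrv u x i * pdrv u x k * pdrv2 u x i k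
          = ∑ i, (C1 * x i ^ 2 * S + C2 * x i ^ 2) := by
            refine Finset.sum_congr rfl fun i _ => ?_
            calc ∑ k, pdrv u x i * pdrv u x k * pdrv2 u x i k
                = ∑ k, (C1 * x i ^ 2 * x k ^ 2 + C2 * (if i = k then x i ^ 2 else 0)) :=
                  Finset.sum_congr rfl fun k _ => step i k
              _ = C1 * x i ^ 2 * S + C2 * x i ^ 2 := by
                  rw [Finset.sum_add_distrib, ← Finset.mul_sum, hsum, ← Finset.mul_sum,
                    Finset.sum_ite_eq, if_pos (Finset.mem_univ i)]
        _ = C1 * S * S + C2 * S := by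
            rw [Finset.sum_add_distrib, ← Finset.sum_mul, ← Finset.mul_sum,
              ← Finset.mul_sum, hsum]
        _ = gradSqNorm u x * ((j : ℝ) * S ^ (a / 2 - 1) * (2 * (a / 2 - 1) + 1)) := by
            rw [e_grad, hC1, hC2, hca, ← hT2S]; ring
    -- the square root of the gradient norm
    have hhalf : (S ^ ((1 : ℝ) / 2)) ^ 2 = S := by
      rw [← Real.rpow_natCast (S ^ ((1 : ℝ) / 2)) 2, ← Real.rpow_mul hS.le]
      norm_num
    have hsqrt : Real.sqrt (gradSqNorm u x)
        = (j : ℝ) * (S ^ (a / 2 - 1) * S ^ ((1 : ℝ) / 2)) := by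
      rw [e_grad, show (j : ℝ) ^ 2 * (S ^ (a / 2 - 1)) ^ 2 * S
          = ((j : ℝ) * (S ^ (a / 2 - 1) * S ^ ((1 : ℝ) / 2))) ^ 2 by
            rw [mul_pow, mul_pow, hhalf]; ring,
        Real.sqrt_sq (by positivity)]
    have hShalf : (0 : ℝ) < S ^ ((1 : ℝ) / 2) := Real.rpow_pos_of_pos hS _
    have hpow : Real.sqrt (gradSqNorm u x) ^ (q - 2)
        = (j : ℝ) ^ (q - 2) * S ^ ((a / 2 - 1) * (q - 2) + (1 / 2) * (q - 2)) := by
      rw [hsqrt, Real.mul_rpow hj0.le (by positivity), Real.mul_rpow hT.le hShalf.le,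
        ← Real.rpow_mul hS.le, ← Real.rpow_mul hS.le, ← Real.rpow_add hS]
    have hKform : 2 * (a / 2 - 1) + (n : ℝ) + (p - 2) * (2 * (a / 2 - 1) + 1) = K := by
      rw [hadef, hKdef]
      field_simp
      ring
    have hexp : (a / 2 - 1) * (q - 2) + 1 / 2 * (q - 2) + (a / 2 - 1) = 0 := by
      rw [hadef]
      field_simp
      ring
    have hmerge : S ^ ((a / 2 - 1) * (q - 2) + 1 / 2 * (q - 2)) * S ^ (a / 2 - 1) = 1 := by
      rw [← Real.rpow_add hS, hexp, Real.rpow_zero]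
    have hjq : (j : ℝ) ^ (q - 2) * (j : ℝ) = (j : ℝ) ^ (q - 1) := by
      rw [show q - 1 = q - 2 + 1 by ring, Real.rpow_add_one hj0.ne']
    have e_delta : DeltaPQ p q u x = (j : ℝ) ^ (q - 1) * K := by
      rw [DeltaPQ, e_lap, e_cross, hpow, mul_div_assoc,
        mul_div_cancel_left₀ _ hgradpos.ne']
      rw [show (j : ℝ) ^ (q - 2) * S ^ ((a / 2 - 1) * (q - 2) + 1 / 2 * (q - 2)) *
            ((j : ℝ) * S ^ (a / 2 - 1) * (2 * (a / 2 - 1) + n)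
              + (p - 2) * ((j : ℝ) * S ^ (a / 2 - 1) * (2 * (a / 2 - 1) + 1)))
          = ((j : ℝ) ^ (q - 2) * (j : ℝ))
              * (S ^ ((a / 2 - 1) * (q - 2) + 1 / 2 * (q - 2)) * S ^ (a / 2 - 1))
              * (2 * (a / 2 - 1) + (n : ℝ) + (p - 2) * (2 * (a / 2 - 1) + 1)) from by ring,
        hjq, hmerge, hKform, mul_one]
    rw [hderiv, e_delta, pow_one]
    field_simp
  · -- the sign
    have h1 : (0 : ℝ) ≤ (j : ℝ) ^ (q - 1) * K :=
      mul_nonneg (Real.rpow_nonneg (by positivity) _) hcoef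
    have h2 : t / D - 1 ≤ 0 := by
      have : t / D ≤ 1 := (div_le_one hD).mpr htD
      linarith
    exact mul_nonpos_of_nonneg_of_nonpos h1 h2
end

section
/- Let p>1, 1<q<2, 0<s<1/q, and define on the region {(x,t): x∈ℝⁿ, -1<t<0, x≠0} the function u(x,t) = |x|^{q/(q-1)}/(-t)^{qs/(q-1)} − ((n+(p-q)/(q-1))/(1-qs))·(q/(q-1))^{q-1}·(-t)^{1-qs}. Then ∂_t u(x,t) ≥ Δ_p^q u(x,t) everywhere on this region, i.e. u is a classical supersolution. -/
open Real Filter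

section Aux

variable {n : ℕ}

lemma hasFDerivAt_u {α : ℝ} (hα : 1 < α) (D C : ℝ) (y : EuclideanSpace ℝ (Fin n)) :
    HasFDerivAt (fun z : EuclideanSpace ℝ (Fin n) => ‖z‖ ^ α / D - C)
      ((D⁻¹ * (α * ‖y‖ ^ (α - 2))) • innerSL ℝ y) y := by
  have h := ((hasFDerivAt_norm_rpow y hα).const_mul (D⁻¹)).sub_const C
  have hf : (fun z : EuclideanSpace ℝ (Fin n) => D⁻¹ * ‖z‖ ^ α - C)
      = fun z : EuclideanSpace ℝ (Fin n) => ‖z‖ ^ α / D - C := by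
    funext z; rw [div_eq_inv_mul]
  rw [hf, smul_smul] at h
  exact h

lemma pdrv_u {α : ℝ} (hα : 1 < α) (D C : ℝ) (y : EuclideanSpace ℝ (Fin n)) (j : Fin n) :
    pdrv (fun z : EuclideanSpace ℝ (Fin n) => ‖z‖ ^ α / D - C) y j
      = α / D * ‖y‖ ^ (α - 2) * y j := by
  rw [pdrv, (hasFDerivAt_u hα D C y).fderiv]
  simp only [ContinuousLinearMap.coe_smul', Pi.smul_apply, innerSL_apply_apply, smul_eq_mul,
    EuclideanSpace.inner_single_right, RCLike.inner_apply, starRingEnd_apply, star_trivial]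
  ring

lemma hasFDerivAt_norm_rpow' {β : ℝ} (x : EuclideanSpace ℝ (Fin n)) (hx : x ≠ 0) :
    HasFDerivAt (fun z : EuclideanSpace ℝ (Fin n) => ‖z‖ ^ β)
      ((β * ‖x‖ ^ (β - 2)) • innerSL ℝ x) x := by
  have hr : (0:ℝ) < ‖x‖ := norm_pos_iff.mpr hx
  have hx2 : (‖x‖ ^ 2 : ℝ) ≠ 0 := by positivity
  have h := ((hasStrictFDerivAt_norm_sq x).hasFDerivAt).rpow_const (p := β / 2) (Or.inl hx2)
  have hf : (fun z : EuclideanSpace ℝ (Fin n) => (‖z‖ ^ 2 : ℝ) ^ (β / 2))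
      = fun z : EuclideanSpace ℝ (Fin n) => ‖z‖ ^ β := by
    funext z
    rw [← Real.rpow_natCast ‖z‖ 2, ← Real.rpow_mul (norm_nonneg z)]
    congr 1
    push_cast; ring
  have he : (‖x‖ ^ 2 : ℝ) ^ (β / 2 - 1) = ‖x‖ ^ (β - 2) := by
    rw [← Real.rpow_natCast ‖x‖ 2, ← Real.rpow_mul (norm_nonneg x)]
    congr 1
    push_cast; ring
  have hd : (β / 2 * (‖x‖ ^ 2 : ℝ) ^ (β / 2 - 1)) • (2 • innerSL ℝ x)
      = (β * ‖x‖ ^ (β - 2)) • innerSL ℝ x := by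
    refine ContinuousLinearMap.ext fun v => ?_
    simp only [ContinuousLinearMap.smul_apply, smul_eq_mul, he]
    ring
  rw [hf, hd] at h
  exact h

lemma pdrv2_u {α : ℝ} (hα : 2 < α) (D C : ℝ) (x : EuclideanSpace ℝ (Fin n)) (hx : x ≠ 0)
    (i j : Fin n) :
    pdrv2 (fun z : EuclideanSpace ℝ (Fin n) => ‖z‖ ^ α / D - C) x i j
      = α / D * ((α - 2) * ‖x‖ ^ (α - 4) * x i * x j
          + ‖x‖ ^ (α - 2) * (if j = i then 1 else 0)) := by
  have hα1 : 1 < α := by linarith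
  have hfun : (fun y : EuclideanSpace ℝ (Fin n) =>
      pdrv (fun z : EuclideanSpace ℝ (Fin n) => ‖z‖ ^ α / D - C) y j)
      = fun y : EuclideanSpace ℝ (Fin n) => α / D * (‖y‖ ^ (α - 2) * y j) := by
    funext y; rw [pdrv_u hα1 D C y j]; ring
  have h1 : HasFDerivAt (fun y : EuclideanSpace ℝ (Fin n) => ‖y‖ ^ (α - 2))
      (((α - 2) * ‖x‖ ^ (α - 4)) • innerSL ℝ x) x := by
    have h := hasFDerivAt_norm_rpow' (β := α - 2) x hx
    rw [show α - 2 - 2 = α - 4 by ring] at h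
    exact h
  have h2 : HasFDerivAt (fun y : EuclideanSpace ℝ (Fin n) => y j)
      (EuclideanSpace.proj (𝕜 := ℝ) j) x := (EuclideanSpace.proj (𝕜 := ℝ) j).hasFDerivAt
  have h3 := (h1.mul h2).const_mul (α / D)
  rw [pdrv2, hfun, pdrv]; erw [h3.fderiv]
  simp only [ContinuousLinearMap.coe_smul', Pi.smul_apply, ContinuousLinearMap.add_apply,
    ContinuousLinearMap.smul_apply, innerSL_apply_apply, smul_eq_mul,
    EuclideanSpace.inner_single_right, RCLike.inner_apply, starRingEnd_apply, star_trivial,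
    PiLp.proj_apply, EuclideanSpace.single_apply]
  ring_nf

lemma deltaPQ_eval (p q : ℝ) {α D : ℝ} (C : ℝ) (hα : 2 < α) (hD : 0 < D)
    (x : EuclideanSpace ℝ (Fin n)) (hx : x ≠ 0) :
    DeltaPQ p q (fun y : EuclideanSpace ℝ (Fin n) => ‖y‖ ^ α / D - C) x
      = (α / D * ‖x‖ ^ (α - 1)) ^ (q - 2) * (α / D * ‖x‖ ^ (α - 2))
          * ((n : ℝ) + (α - 2) + (p - 2) * (α - 1)) := by
  have hα1 : 1 < α := by linarith
  have hr : (0:ℝ) < ‖x‖ := norm_pos_iff.mpr hx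
  set u : EuclideanSpace ℝ (Fin n) → ℝ := fun y => ‖y‖ ^ α / D - C with hu
  set r : ℝ := ‖x‖ with hrdef
  set c : ℝ := α / D with hcdef
  have hc : 0 < c := div_pos (by linarith) hD
  set A : ℝ := r ^ (α - 4) with hAdef
  have hA : 0 < A := Real.rpow_pos_of_pos hr _
  have e2 : r ^ (α - 2) = A * r ^ 2 := by
    rw [hAdef, show α - 2 = (α - 4) + 2 by ring, Real.rpow_add hr,
      show ((2:ℝ)) = ((2:ℕ):ℝ) by norm_num, Real.rpow_natCast]
  have e1 : r ^ (α - 1) = A * r ^ 3 := by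
    rw [hAdef, show α - 1 = (α - 4) + 3 by ring, Real.rpow_add hr,
      show ((3:ℝ)) = ((3:ℕ):ℝ) by norm_num, Real.rpow_natCast]
  have hS : ∑ i, x i ^ 2 = r ^ 2 := by
    rw [hrdef, EuclideanSpace.norm_eq, Real.sq_sqrt (by positivity)]
    exact Finset.sum_congr rfl fun i _ => by rw [Real.norm_eq_abs, sq_abs]
  have hpd : ∀ i, pdrv u x i = c * (A * r ^ 2) * x i := fun i => by
    rw [hu, pdrv_u hα1 D C x i, ← e2]
  have hpd2 : ∀ i j, pdrv2 u x i j
      = c * ((α - 2) * A * x i * x j + A * r ^ 2 * (if j = i then 1 else 0)) := fun i j => by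
    rw [hu, pdrv2_u hα D C x hx i j, ← e2]
  have hG : gradSqNorm u x = (c * r ^ (α - 1)) ^ 2 := by
    rw [gradSqNorm]
    rw [Finset.sum_congr rfl fun i (_ : i ∈ Finset.univ) =>
      (by rw [hpd i]; ring : (pdrv u x i) ^ 2 = (c * A * r ^ 2) ^ 2 * x i ^ 2)]
    rw [← Finset.mul_sum, hS, e1]
    ring
  have hLap : (∑ i, pdrv2 u x i i) = c * r ^ (α - 2) * ((n : ℝ) + (α - 2)) := by
    rw [Finset.sum_congr rfl fun i (_ : i ∈ Finset.univ) =>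
      (by rw [hpd2 i i]; simp; ring :
        pdrv2 u x i i = c * (α - 2) * A * x i ^ 2 + c * (A * r ^ 2))]
    rw [Finset.sum_add_distrib, ← Finset.mul_sum, hS, Finset.sum_const, Finset.card_univ,
      Fintype.card_fin, nsmul_eq_mul, e2]
    ring
  have hDS : (∑ i, ∑ j, pdrv u x i * pdrv u x j * pdrv2 u x i j)
      = (c * r ^ (α - 1)) ^ 2 * (c * r ^ (α - 2) * (α - 1)) := by
    have inner_eq : ∀ i, (∑ j, pdrv u x i * pdrv u x j * pdrv2 u x i j)
        = (c ^ 3 * A ^ 3 * r ^ 4 * (α - 2) * r ^ 2 + c ^ 3 * A ^ 3 * r ^ 6) * x i ^ 2 := by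
      intro i
      have hsummand : ∀ j, pdrv u x i * pdrv u x j * pdrv2 u x i j
          = c ^ 3 * A ^ 3 * r ^ 4 * (α - 2) * x i ^ 2 * x j ^ 2
            + (if j = i then c ^ 3 * A ^ 3 * r ^ 6 * x i * x j else 0) := by
        intro j
        rw [hpd i, hpd j, hpd2 i j]
        by_cases h : j = i <;> simp [h] <;> ring
      rw [Finset.sum_congr rfl fun j (_ : j ∈ Finset.univ) => hsummand j,
        Finset.sum_add_distrib, ← Finset.mul_sum, hS, Finset.sum_ite_eq' Finset.univ i]
      simp
      ring
    rw [Finset.sum_congr rfl fun i (_ : i ∈ Finset.univ) => inner_eq i, ← Finset.mul_sum, hS,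
      e1, e2]
    ring
  rw [DeltaPQ, hG, Real.sqrt_sq (by positivity), hLap, hDS]
  have hfrac : (p - 2) * ((c * r ^ (α - 1)) ^ 2 * (c * r ^ (α - 2) * (α - 1)))
      / (c * r ^ (α - 1)) ^ 2 = (p - 2) * (c * r ^ (α - 2) * (α - 1)) := by
    rw [mul_div_assoc, mul_comm ((c * r ^ (α - 1)) ^ 2), mul_div_assoc,
      div_self (by positivity), mul_one]
  rw [hfrac]
  ring

end Aux

theorem stmt3 (n : ℕ) (p q s : ℝ) (hp : 1 < p) (hq1 : 1 < q) (hq2 : q < 2)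
    (hs0 : 0 < s) (hs1 : s < 1 / q) (hcoef : 0 < (n : ℝ) + (p - q) / (q - 1))
    (x : EuclideanSpace ℝ (Fin n)) (hx : x ≠ 0) (t : ℝ) (ht1 : -1 < t) (ht0 : t < 0) :
    deriv (fun τ : ℝ =>
        ‖x‖ ^ (q / (q - 1)) / (-τ) ^ (q * s / (q - 1))
          - ((n : ℝ) + (p - q) / (q - 1)) / (1 - q * s) * (q / (q - 1)) ^ (q - 1)
              * (-τ) ^ (1 - q * s)) t
      ≥ DeltaPQ p q (fun y : EuclideanSpace ℝ (Fin n) =>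
          ‖y‖ ^ (q / (q - 1)) / (-t) ^ (q * s / (q - 1))
            - ((n : ℝ) + (p - q) / (q - 1)) / (1 - q * s) * (q / (q - 1)) ^ (q - 1)
                * (-t) ^ (1 - q * s)) x := by
  have hq1' : (0:ℝ) < q - 1 := by linarith
  have hq0 : (0:ℝ) < q := by linarith
  have hα2 : 2 < q / (q - 1) := by rw [lt_div_iff₀ hq1']; linarith
  have hα0 : (0:ℝ) < q / (q - 1) := by positivity
  have ht : (0:ℝ) < -t := by linarith
  have hD : (0:ℝ) < (-t) ^ (q * s / (q - 1)) := Real.rpow_pos_of_pos ht _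
  have hqs : q * s < 1 := by
    have := (lt_div_iff₀ hq0).mp hs1
    linarith [mul_comm s q]
  have hqs0 : 0 < q * s := by positivity
  have hr : (0:ℝ) < ‖x‖ := norm_pos_iff.mpr hx
  have hT : (0:ℝ) < (-t) ^ (q * s) := Real.rpow_pos_of_pos ht _
  -- the right-hand side
  rw [deltaPQ_eval p q
    (((n : ℝ) + (p - q) / (q - 1)) / (1 - q * s) * (q / (q - 1)) ^ (q - 1)
      * (-t) ^ (1 - q * s)) hα2 hD x hx]
  set α : ℝ := q / (q - 1) with hαdef
  set D : ℝ := (-t) ^ (q * s / (q - 1)) with hDdef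
  have hRHS : (α / D * ‖x‖ ^ (α - 1)) ^ (q - 2) * (α / D * ‖x‖ ^ (α - 2))
      * ((n : ℝ) + (α - 2) + (p - 2) * (α - 1))
      = ((n : ℝ) + (p - q) / (q - 1)) * α ^ (q - 1) / (-t) ^ (q * s) := by
    have h1 : (α / D * ‖x‖ ^ (α - 1)) ^ (q - 2)
        = (α / D) ^ (q - 2) * ‖x‖ ^ ((α - 1) * (q - 2)) := by
      rw [Real.mul_rpow (by positivity) (Real.rpow_nonneg hr.le _),
        ← Real.rpow_mul hr.le]
    have h2 : (α / D) ^ (q - 2) * (α / D) = (α / D) ^ (q - 1) := by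
      nth_rewrite 2 [← Real.rpow_one (α / D)]
      rw [← Real.rpow_add (by positivity)]
      congr 1
      ring
    have h3 : ‖x‖ ^ ((α - 1) * (q - 2)) * ‖x‖ ^ (α - 2) = 1 := by
      rw [← Real.rpow_add hr]
      rw [show (α - 1) * (q - 2) + (α - 2) = 0 by rw [hαdef]; field_simp; ring]
      exact Real.rpow_zero _
    have h4 : (α / D) ^ (q - 1) = α ^ (q - 1) / (-t) ^ (q * s) := by
      rw [Real.div_rpow hα0.le hD.le, hDdef, ← Real.rpow_mul ht.le,
        div_mul_cancel₀ _ (ne_of_gt hq1')]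
    have h5 : (n : ℝ) + (α - 2) + (p - 2) * (α - 1) = (n : ℝ) + (p - q) / (q - 1) := by
      rw [hαdef]; field_simp; ring
    calc (α / D * ‖x‖ ^ (α - 1)) ^ (q - 2) * (α / D * ‖x‖ ^ (α - 2))
          * ((n : ℝ) + (α - 2) + (p - 2) * (α - 1))
        = ((α / D) ^ (q - 2) * (α / D)) * (‖x‖ ^ ((α - 1) * (q - 2)) * ‖x‖ ^ (α - 2))
          * ((n : ℝ) + (α - 2) + (p - 2) * (α - 1)) := by rw [h1]; ring
      _ = ((n : ℝ) + (p - q) / (q - 1)) * α ^ (q - 1) / (-t) ^ (q * s) := by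
          rw [h2, h3, h4, h5]; ring
  rw [hRHS]
  -- the left-hand side
  have hneg : HasDerivAt (fun τ : ℝ => -τ) (-1) t := hasDerivAt_neg' t
  have hg : HasDerivAt (fun τ : ℝ => (-τ) ^ (q * s / (q - 1)))
      (-1 * (q * s / (q - 1)) * (-t) ^ (q * s / (q - 1) - 1)) t :=
    hneg.rpow_const (Or.inl (ne_of_gt ht))
  have h1 : HasDerivAt (fun τ : ℝ => ‖x‖ ^ α / (-τ) ^ (q * s / (q - 1)))
      ((0 * (-t) ^ (q * s / (q - 1))
        - ‖x‖ ^ α * (-1 * (q * s / (q - 1)) * (-t) ^ (q * s / (q - 1) - 1)))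
        / ((-t) ^ (q * s / (q - 1))) ^ 2) t :=
    (hasDerivAt_const t (‖x‖ ^ α)).div hg (ne_of_gt hD)
  have h2 : HasDerivAt (fun τ : ℝ =>
      ((n : ℝ) + (p - q) / (q - 1)) / (1 - q * s) * α ^ (q - 1) * (-τ) ^ (1 - q * s))
      (((n : ℝ) + (p - q) / (q - 1)) / (1 - q * s) * α ^ (q - 1)
        * (-1 * (1 - q * s) * (-t) ^ (1 - q * s - 1))) t :=
    (hneg.rpow_const (Or.inl (ne_of_gt ht))).const_mul _
  have hder := (h1.sub h2).deriv
  erw [hder]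
  have e_second : ((n : ℝ) + (p - q) / (q - 1)) / (1 - q * s) * α ^ (q - 1)
      * (-1 * (1 - q * s) * (-t) ^ (1 - q * s - 1))
      = -(((n : ℝ) + (p - q) / (q - 1)) * α ^ (q - 1) / (-t) ^ (q * s)) := by
    have hg1 : (1:ℝ) - q * s ≠ 0 := by linarith
    rw [show 1 - q * s - 1 = -(q * s) by ring, Real.rpow_neg ht.le]
    field_simp
  rw [e_second]
  have hfirst : 0 ≤ (0 * (-t) ^ (q * s / (q - 1))
      - ‖x‖ ^ α * (-1 * (q * s / (q - 1)) * (-t) ^ (q * s / (q - 1) - 1)))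
      / ((-t) ^ (q * s / (q - 1))) ^ 2 := by
    have heq : (0 * (-t) ^ (q * s / (q - 1))
        - ‖x‖ ^ α * (-1 * (q * s / (q - 1)) * (-t) ^ (q * s / (q - 1) - 1)))
        = ‖x‖ ^ α * (q * s / (q - 1)) * (-t) ^ (q * s / (q - 1) - 1) := by ring
    rw [heq]
    have := Real.rpow_nonneg hr.le α
    have := Real.rpow_pos_of_pos ht (q * s / (q - 1) - 1)
    positivity
  linarith
end

section
/- Let p>1, 1<q<2, set B = min{ (n+(p-q)/(q-1))·(q/(q-1))^{q-1}·(2-q), 1 } and define v(x,t) = (-t)^{1/(2-q)}·(B − |x|^{q/(q-1)}) for -1<t<0 and 0<|x|^{q/(q-1)}<B. Then ∂_t v(x,t) − Δ_p^q v(x,t) ≥ ((q/(q-1))^{q-1}(n+(p-q)/(q-1)) − B/(2-q))·(-t)^{(q-1)/(2-q)} ≥ 0, so v is a classical supersolution of ∂_t u = Δ_p^q u on this region. -/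
open Real Filter

noncomputable def gfun {n : ℕ} (y : EuclideanSpace ℝ (Fin n)) : ℝ := ∑ i, y i ^ 2

lemma gfun_eq_normsq {n : ℕ} (y : EuclideanSpace ℝ (Fin n)) : gfun y = ‖y‖ ^ (2:ℕ) := by
  rw [EuclideanSpace.norm_eq, Real.sq_sqrt (by positivity)]
  simp [gfun, sq_abs]

lemma gfun_nonneg {n : ℕ} (y : EuclideanSpace ℝ (Fin n)) : 0 ≤ gfun y :=
  Finset.sum_nonneg fun _ _ => sq_nonneg _

lemma hasFDerivAt_gfun {n : ℕ} (y : EuclideanSpace ℝ (Fin n)) :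
    HasFDerivAt gfun (∑ i, (2 * y i) • (EuclideanSpace.proj i : EuclideanSpace ℝ (Fin n) →L[ℝ] ℝ)) y := by
  have : ∀ i : Fin n, HasFDerivAt (fun z : EuclideanSpace ℝ (Fin n) => z i ^ 2)
      ((2 * y i) • (EuclideanSpace.proj i : EuclideanSpace ℝ (Fin n) →L[ℝ] ℝ)) y := by
    intro i
    have h := ((EuclideanSpace.proj i : EuclideanSpace ℝ (Fin n) →L[ℝ] ℝ).hasFDerivAt (x := y)).fun_mul
      ((EuclideanSpace.proj i : EuclideanSpace ℝ (Fin n) →L[ℝ] ℝ).hasFDerivAt (x := y))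
    simp only [PiLp.proj_apply] at h
    have h2 : (fun z : EuclideanSpace ℝ (Fin n) => z i * z i) = fun z => z i ^ 2 := by
      funext z; ring
    rw [h2] at h
    refine h.congr_fderiv ?_
    rw [two_mul, add_smul]
  exact HasFDerivAt.fun_sum fun i _ => this i

lemma continuous_gfun {n : ℕ} : Continuous (gfun (n := n)) := by
  unfold gfun
  exact continuous_finset_sum _ fun i _ => ((continuous_apply i).comp (PiLp.continuous_ofLp 2 _)).pow 2

lemma hasFDerivAt_proj {n : ℕ} (j : Fin n) (y : EuclideanSpace ℝ (Fin n)) :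
    HasFDerivAt (fun z : EuclideanSpace ℝ (Fin n) => z j)
      (EuclideanSpace.proj j : EuclideanSpace ℝ (Fin n) →L[ℝ] ℝ) y :=
  (EuclideanSpace.proj j : EuclideanSpace ℝ (Fin n) →L[ℝ] ℝ).hasFDerivAt

lemma single_apply' {n : ℕ} (i j : Fin n) :
    (EuclideanSpace.single j (1:ℝ)) i = if i = j then (1:ℝ) else 0 := by
  rw [EuclideanSpace.single_apply]

lemma hasFDerivAt_v {n : ℕ} (c B m : ℝ) (y : EuclideanSpace ℝ (Fin n)) (hy : gfun y ≠ 0) :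
    HasFDerivAt (fun z : EuclideanSpace ℝ (Fin n) => c * (B - gfun z ^ m))
      ((-(c * m) * gfun y ^ (m - 1)) •
        (∑ i, (2 * y i) • (EuclideanSpace.proj i : EuclideanSpace ℝ (Fin n) →L[ℝ] ℝ))) y := by
  have h1 := (hasFDerivAt_gfun y).rpow_const (p := m) (Or.inl hy)
  have h2 := (h1.const_sub B).const_mul c
  refine h2.congr_fderiv ?_
  rw [smul_neg, smul_smul, ← neg_smul]
  congr 1; ring

lemma pdrv_v {n : ℕ} (c B m : ℝ) (y : EuclideanSpace ℝ (Fin n)) (hy : gfun y ≠ 0) (j : Fin n) :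
    pdrv (fun z => c * (B - gfun z ^ m)) y j = -(2 * c * m) * (gfun y ^ (m - 1) * y j) := by
  unfold pdrv
  rw [(hasFDerivAt_v c B m y hy).fderiv]
  simp only [ContinuousLinearMap.smul_apply, ContinuousLinearMap.sum_apply,
    ContinuousLinearMap.smul_apply, PiLp.proj_apply, smul_eq_mul, single_apply']
  rw [Finset.sum_congr rfl (fun i _ => by rw [mul_ite, mul_one, mul_zero]), Finset.sum_ite_eq']
  simp; ring

lemma pdrv2_v {n : ℕ} (c B m : ℝ) (x : EuclideanSpace ℝ (Fin n)) (hx : 0 < gfun x) (i j : Fin n) :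
    pdrv2 (fun z => c * (B - gfun z ^ m)) x i j
      = -(2 * c * m) * (gfun x ^ (m - 1) * (if i = j then (1:ℝ) else 0)
          + 2 * (m - 1) * gfun x ^ (m - 2) * x i * x j) := by
  have hev : (fun y => pdrv (fun z : EuclideanSpace ℝ (Fin n) => c * (B - gfun z ^ m)) y j)
      =ᶠ[nhds x] (fun y => -(2 * c * m) * (gfun y ^ (m - 1) * y j)) := by
    have hpos : ∀ᶠ y in nhds x, 0 < gfun y :=
      ContinuousAt.eventually_lt continuousAt_const continuous_gfun.continuousAt hx
    filter_upwards [hpos] with y hy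
    exact pdrv_v c B m y hy.ne' j
  show fderiv ℝ (fun y => pdrv (fun z : EuclideanSpace ℝ (Fin n) => c * (B - gfun z ^ m)) y j) x
      (EuclideanSpace.single i 1) = _
  rw [Filter.EventuallyEq.fderiv_eq hev]
  -- derivative of y ↦ -(2cm) * (gfun y ^ (m-1) * y j)
  have h1 := (hasFDerivAt_gfun x).rpow_const (p := m - 1) (Or.inl hx.ne')
  have h2 := (h1.fun_mul (hasFDerivAt_proj j x)).const_mul (-(2 * c * m))
  rw [h2.fderiv]
  simp only [ContinuousLinearMap.smul_apply, ContinuousLinearMap.add_apply,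
    ContinuousLinearMap.sum_apply, PiLp.proj_apply, smul_eq_mul, single_apply']
  rw [Finset.sum_congr rfl (fun k _ => by rw [mul_ite, mul_one, mul_zero]), Finset.sum_ite_eq']
  simp only [Finset.mem_univ, if_true]
  rcases eq_or_ne i j with h | h
  · subst h; simp only [if_pos rfl]; ring_nf
  · simp only [if_neg h, if_neg (Ne.symm h)]; ring_nf

theorem stmt4 (n : ℕ) (p q : ℝ) (hp : 1 < p) (hq1 : 1 < q) (hq2 : q < 2)
    (hcoef : 0 < (n : ℝ) + (p - q) / (q - 1))
    (B : ℝ) (hB : B = min (((n : ℝ) + (p - q) / (q - 1)) * (q / (q - 1)) ^ (q - 1) * (2 - q)) 1)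
    (x : EuclideanSpace ℝ (Fin n)) (t : ℝ) (ht1 : -1 < t) (ht0 : t < 0)
    (hx0 : 0 < ‖x‖ ^ (q / (q - 1))) (hxB : ‖x‖ ^ (q / (q - 1)) < B) :
    deriv (fun τ : ℝ => (-τ) ^ (1 / (2 - q)) * (B - ‖x‖ ^ (q / (q - 1)))) t
        - DeltaPQ p q (fun y : EuclideanSpace ℝ (Fin n) =>
            (-t) ^ (1 / (2 - q)) * (B - ‖y‖ ^ (q / (q - 1)))) x
      ≥ ((q / (q - 1)) ^ (q - 1) * ((n : ℝ) + (p - q) / (q - 1)) - B / (2 - q))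
          * (-t) ^ ((q - 1) / (2 - q)) ∧
    ((q / (q - 1)) ^ (q - 1) * ((n : ℝ) + (p - q) / (q - 1)) - B / (2 - q))
        * (-t) ^ ((q - 1) / (2 - q)) ≥ 0 := by
  have hq1' : (0:ℝ) < q - 1 := by linarith
  have h2q : (0:ℝ) < 2 - q := by linarith
  have ht : (0:ℝ) < -t := by linarith
  have hα : 0 < q / (q - 1) := div_pos (by linarith) hq1'
  set m : ℝ := q / (2 * (q - 1)) with hm
  have hm0 : 0 < m := by rw [hm]; positivity
  have h2m : 2 * m = q / (q - 1) := by rw [hm]; field_simp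
  have hxn : 0 < ‖x‖ := by
    rcases (norm_nonneg x).lt_or_eq with h | h
    · exact h
    · exfalso; rw [← h, Real.zero_rpow hα.ne'] at hx0; exact lt_irrefl 0 hx0
  have hs : 0 < gfun x := by rw [gfun_eq_normsq]; positivity
  set c : ℝ := (-t) ^ (1 / (2 - q)) with hcdef
  have hc : 0 < c := Real.rpow_pos_of_pos ht _
  set s : ℝ := gfun x with hsdef
  -- rewrite the function
  have hnorm : ∀ y : EuclideanSpace ℝ (Fin n), ‖y‖ ^ (q / (q - 1)) = gfun y ^ m := by
    intro y
    rw [gfun_eq_normsq, ← Real.rpow_natCast ‖y‖ 2, ← Real.rpow_mul (norm_nonneg y)]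
    congr 1
    push_cast
    linarith [h2m]
  have hfun : (fun y : EuclideanSpace ℝ (Fin n) => c * (B - ‖y‖ ^ (q / (q - 1))))
      = fun y => c * (B - gfun y ^ m) := by
    funext y; rw [hnorm y]
  rw [hfun]
  have hP : ∀ i, pdrv (fun y => c * (B - gfun y ^ m)) x i
      = -(2 * c * m) * (s ^ (m - 1) * x i) := fun i => pdrv_v c B m x hs.ne' i
  have hP2 : ∀ i j, pdrv2 (fun y => c * (B - gfun y ^ m)) x i j
      = -(2 * c * m) * (s ^ (m - 1) * (if i = j then (1:ℝ) else 0)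
          + 2 * (m - 1) * s ^ (m - 2) * x i * x j) := fun i j => pdrv2_v c B m x hs i j
  have hgs : ∑ i, (x i) ^ 2 = s := rfl
  have hgrad : gradSqNorm (fun y => c * (B - gfun y ^ m)) x
      = (2 * c * m) ^ 2 * (s ^ (m - 1)) ^ 2 * s := by
    unfold gradSqNorm
    calc ∑ i, (pdrv (fun y => c * (B - gfun y ^ m)) x i) ^ 2
        = ∑ i, ((2*c*m)^2 * (s^(m-1))^2) * (x i)^2 :=
          Finset.sum_congr rfl fun i _ => by rw [hP i]; ring
      _ = (2*c*m)^2 * (s^(m-1))^2 * s := by rw [← Finset.mul_sum, hgs]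
  have hlap : ∑ i, pdrv2 (fun y => c * (B - gfun y ^ m)) x i i
      = -(2*c*m) * ((n:ℝ) * s^(m-1) + 2*(m-1) * s^(m-2) * s) := by
    calc ∑ i, pdrv2 (fun y => c * (B - gfun y ^ m)) x i i
        = ∑ i : Fin n, (-(2*c*m) * s^(m-1) + (-(2*c*m) * (2*(m-1)*s^(m-2))) * (x i)^2) :=
          Finset.sum_congr rfl fun i _ => by rw [hP2 i i, if_pos rfl]; ring
      _ = _ := by
          rw [Finset.sum_add_distrib, Finset.sum_const, ← Finset.mul_sum, hgs,
            Finset.card_univ, Fintype.card_fin, nsmul_eq_mul]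
          ring
  have hdbl : ∑ i, ∑ j, pdrv (fun y => c * (B - gfun y ^ m)) x i
        * pdrv (fun y => c * (B - gfun y ^ m)) x j
        * pdrv2 (fun y => c * (B - gfun y ^ m)) x i j
      = (-(2*c*m))^3 * (s^(m-1))^2 * (s^(m-1) * s + 2*(m-1) * s^(m-2) * s * s) := by
    have hterm : ∀ i j, pdrv (fun y => c * (B - gfun y ^ m)) x i
        * pdrv (fun y => c * (B - gfun y ^ m)) x j
        * pdrv2 (fun y => c * (B - gfun y ^ m)) x i j
      = ((-(2*c*m))^3 * (s^(m-1))^2 * s^(m-1)) * (if i = j then x i * x j else 0)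
        + ((-(2*c*m))^3 * (s^(m-1))^2 * (2*(m-1)*s^(m-2))) * ((x i)^2 * (x j)^2) := by
      intro i j
      rw [hP i, hP j, hP2 i j]
      rcases eq_or_ne i j with h | h
      · subst h; rw [if_pos rfl, if_pos rfl]; ring
      · rw [if_neg h, if_neg h]; ring
    calc ∑ i, ∑ j, pdrv (fun y => c * (B - gfun y ^ m)) x i
        * pdrv (fun y => c * (B - gfun y ^ m)) x j
        * pdrv2 (fun y => c * (B - gfun y ^ m)) x i j
        = ∑ i : Fin n, (((-(2*c*m))^3 * (s^(m-1))^2 * s^(m-1)) * ((x i)*(x i))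
            + ((-(2*c*m))^3 * (s^(m-1))^2 * (2*(m-1)*s^(m-2))) * ((x i)^2 * s)) := by
          refine Finset.sum_congr rfl fun i _ => ?_
          rw [Finset.sum_congr rfl fun j _ => hterm i j, Finset.sum_add_distrib]
          congr 1
          · rw [← Finset.mul_sum, Finset.sum_ite_eq]
            simp
          · rw [← Finset.mul_sum]
            congr 1
            rw [← Finset.mul_sum, hgs]
      _ = _ := by
          rw [Finset.sum_add_distrib, ← Finset.mul_sum, ← Finset.mul_sum]
          have : ∑ i, x i * x i = s := by rw [← hgs]; exact Finset.sum_congr rfl fun i _ => (sq (x i)).symm ▸ by ring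
          rw [this, ← Finset.sum_mul, hgs]
          ring
  -- rpow arithmetic
  have e : ∀ a b : ℝ, s ^ a * s ^ b = s ^ (a + b) := fun a b => (Real.rpow_add hs a b).symm
  have hcm0 : (0:ℝ) < 2 * c * m := by positivity
  have hsp : ∀ a : ℝ, 0 < s ^ a := fun a => Real.rpow_pos_of_pos hs a
  have es : s ^ (m - 2) * s = s ^ (m - 1) := by
    nth_rewrite 2 [← Real.rpow_one s]
    rw [e]; congr 1; ring
  have hsqrt : Real.sqrt ((2*c*m)^2 * (s^(m-1))^2 * s) = (2*c*m) * s^(m - 1/2) := by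
    have e1 : (2*c*m)^2 * (s^(m-1))^2 * s = ((2*c*m) * s^(m - 1/2))^2 := by
      have e2 : (s^(m-1))^2 * s = (s^(m-1/2))^2 := by
        calc (s^(m-1))^2 * s = s^(m-1) * s^(m-1) * s^(1:ℝ) := by rw [Real.rpow_one, sq]
          _ = s^((m-1) + (m-1) + 1) := by rw [e, e]
          _ = s^((m-1/2) + (m-1/2)) := by congr 1; ring
          _ = (s^(m-1/2))^2 := by rw [← e, sq]
      calc (2*c*m)^2 * (s^(m-1))^2 * s = (2*c*m)^2 * ((s^(m-1))^2 * s) := by ring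
        _ = (2*c*m)^2 * (s^(m-1/2))^2 := by rw [e2]
        _ = ((2*c*m) * s^(m - 1/2))^2 := by ring
    rw [e1, Real.sqrt_sq (mul_nonneg hcm0.le (hsp _).le)]
  have hdiv : (p-2) * ((-(2*c*m))^3 * (s^(m-1))^2 * (s^(m-1)*s + 2*(m-1)*s^(m-2)*s*s))
      / ((2*c*m)^2 * (s^(m-1))^2 * s)
      = (p-2) * (-(2*c*m) * (s^(m-1) + 2*(m-1)*s^(m-2)*s)) := by
    rw [div_eq_iff (by positivity)]
    ring
  have hbr : -(2*c*m) * ((n:ℝ) * s^(m-1) + 2*(m-1)*s^(m-2)*s)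
      + (p-2) * (-(2*c*m) * (s^(m-1) + 2*(m-1)*s^(m-2)*s))
      = -(2*c*m) * s^(m-1) * ((n:ℝ) + 2*m - 2 + (p-2)*(2*m-1)) := by
    linear_combination (-(2*c*m) * (2*(m-1)) * (p-1)) * es
  have hmul : ((2*c*m) * s^(m - 1/2)) ^ (q-2) = (2*c*m)^(q-2) * s^((m - 1/2)*(q-2)) := by
    rw [Real.mul_rpow hcm0.le (hsp _).le, Real.rpow_mul hs.le]
  have hexp0 : (m - 1/2)*(q-2) + (m-1) = 0 := by
    rw [hm]; field_simp; ring
  have hpow : (2*c*m)^(q-1) = (2*c*m)^(q-2) * (2*c*m) := by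
    rw [show q-1 = (q-2)+1 by ring, Real.rpow_add hcm0, Real.rpow_one]
  have h2cm : 2*c*m = c * (q/(q-1)) := by rw [← h2m]; ring
  have hcq : c^(q-1) = (-t)^((q-1)/(2-q)) := by
    rw [hcdef, ← Real.rpow_mul ht.le]; congr 1; ring
  have hKK : (n:ℝ) + 2*m - 2 + (p-2)*(2*m-1) = (n:ℝ) + (p-q)/(q-1) := by
    rw [hm]; field_simp; ring
  have hDelta : DeltaPQ p q (fun y => c * (B - gfun y ^ m)) x
      = -((q/(q-1))^(q-1) * ((n:ℝ) + (p-q)/(q-1)) * (-t)^((q-1)/(2-q))) := by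
    unfold DeltaPQ
    rw [hgrad, hlap, hdbl, hsqrt, hdiv, hbr, hmul, hKK]
    calc (2*c*m)^(q-2) * s^((m-1/2)*(q-2)) * (-(2*c*m) * s^(m-1) * ((n:ℝ) + (p-q)/(q-1)))
        = -((2*c*m)^(q-2) * (2*c*m)) * (s^((m-1/2)*(q-2)) * s^(m-1)) * ((n:ℝ) + (p-q)/(q-1)) := by
          ring
      _ = -((2*c*m)^(q-1)) * s^((m-1/2)*(q-2) + (m-1)) * ((n:ℝ) + (p-q)/(q-1)) := by
          rw [hpow, e]
      _ = -((2*c*m)^(q-1)) * ((n:ℝ) + (p-q)/(q-1)) := by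
          rw [hexp0, Real.rpow_zero]; ring
      _ = _ := by
          rw [h2cm, Real.mul_rpow hc.le hα.le, hcq]; ring
  -- time derivative
  have hder : deriv (fun τ : ℝ => (-τ) ^ (1 / (2 - q)) * (B - ‖x‖ ^ (q / (q - 1)))) t
      = -1 * (1/(2-q)) * (-t)^(1/(2-q)-1) * (B - ‖x‖ ^ (q / (q - 1))) := by
    have h1 : HasDerivAt (fun τ : ℝ => -τ) (-1) t := (hasDerivAt_id t).neg
    have h2 := (h1.rpow_const (p := 1/(2-q)) (Or.inl ht.ne')).mul_const (B - ‖x‖ ^ (q / (q - 1)))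
    exact h2.deriv
  have hTpow : (-t)^(1/(2-q)-1) = (-t)^((q-1)/(2-q)) := by
    congr 1; field_simp; ring
  set T : ℝ := (-t)^((q-1)/(2-q)) with hT
  have hT0 : 0 ≤ T := Real.rpow_nonneg ht.le _
  have hBle : B / (2-q) ≤ (q/(q-1))^(q-1) * ((n:ℝ) + (p-q)/(q-1)) := by
    rw [div_le_iff₀ h2q]
    calc B ≤ ((n:ℝ) + (p-q)/(q-1)) * (q/(q-1))^(q-1) * (2-q) := hB ▸ min_le_left _ _
      _ = (q/(q-1))^(q-1) * ((n:ℝ) + (p-q)/(q-1)) * (2-q) := by ring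
  constructor
  · rw [hder, hDelta, hTpow]
    have key : (-1 * (1/(2-q)) * T) * (B - ‖x‖ ^ (q / (q - 1)))
        - (-((q/(q-1))^(q-1) * ((n:ℝ) + (p-q)/(q-1)) * T))
        - (((q/(q-1))^(q-1) * ((n:ℝ) + (p-q)/(q-1)) - B/(2-q)) * T)
        = T * (‖x‖ ^ (q / (q - 1))) * (1/(2-q)) := by ring
    have hpos : 0 ≤ T * (‖x‖ ^ (q / (q - 1))) * (1/(2-q)) := by positivity
    linarith [key, hpos]
  · exact mul_nonneg (by linarith) hT0
end
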